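/- arXiv:1903.11251 — 3 statements merged into one kernel-verified Lean document; each statement's English description precedes it below -/
import Mathlib

section
/- Projected soft-thresholding solves the proximal problem in L²: Let (Ω, 𝔐, μ) be a finite measure space, let σ̃ : Ω → ℝ be measurable with ∫ σ̃² dμ < ∞, let τ > 0 and σ_l ≤ 0 ≤ σ_u. Then the function x ↦ S(σ̃(x)) takes values in [σ_l, σ_u], the integrals τ·∫ |S(σ̃(x))| dμ + (1/2)·∫ (S(σ̃(x)) − σ̃(x))² dμ are finite, and for every measurable σ : Ω → ℝ with σ_l ≤ σ(x) ≤ σ_u for μ-almost every x it holds that τ·∫ |S(σ̃(x))| dμ(x) + (1/2)·∫ (S(σ̃(x)) − σ̃(x))² dμ(x) ≤ τ·∫ |σ(x)| dμ(x) + (1/2)·∫ (σ(x) − σ̃(x))² dμ(x). -/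
open MeasureTheory

/-- The projected soft-thresholding function: for threshold `τ > 0` and bounds
`σl ≤ 0 ≤ σu`, `projSoftThresh τ σl σu y = min (y - τ) σu` if `y > τ`, `0` if `|y| ≤ τ`,
and `max (y + τ) σl` if `y < -τ`. -/
noncomputable def projSoftThresh (τ σl σu y : ℝ) : ℝ :=
  if τ < y then min (y - τ) σu else if |y| ≤ τ then 0 else max (y + τ) σl

lemma pst_meas (τ σl σu : ℝ) : Measurable (projSoftThresh τ σl σu) := by
  unfold projSoftThresh
  apply Measurable.ite (measurableSet_lt measurable_const measurable_id)
  · exact (measurable_id.sub measurable_const).min measurable_const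
  · apply Measurable.ite (measurableSet_le measurable_id.abs measurable_const) measurable_const
    exact (measurable_id.add measurable_const).max measurable_const

lemma pst_key (τ σl σu y s : ℝ) (hτ : 0 < τ) (hl : σl ≤ 0) (hu : 0 ≤ σu)
    (hs1 : σl ≤ s) (hs2 : s ≤ σu) :
    τ * |projSoftThresh τ σl σu y| + (1/2) * (projSoftThresh τ σl σu y - y)^2 ≤
      τ * |s| + (1/2) * (s - y)^2 := by
  unfold projSoftThresh
  split_ifs with h1 h2
  · rw [abs_of_nonneg (le_min (by linarith) hu)]
    rcases le_or_gt 0 s with hs0 | hs0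
    · rw [abs_of_nonneg hs0]
      rcases min_cases (y - τ) σu with ⟨hm, hm2⟩ | ⟨hm, hm2⟩ <;> rw [hm]
      · nlinarith [sq_nonneg (s - y + τ)]
      · nlinarith [sq_nonneg (s - y + τ), mul_nonneg (sub_nonneg.2 hs2) (show (0:ℝ) ≤ 2*y - σu - s - 2*τ by linarith)]
    · rw [abs_of_neg hs0]
      rcases min_cases (y - τ) σu with ⟨hm, hm2⟩ | ⟨hm, hm2⟩ <;> rw [hm]
      · nlinarith [sq_nonneg (s - y + τ), mul_pos hτ (neg_pos.2 hs0)]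
      · nlinarith [mul_pos hτ (neg_pos.2 hs0), mul_nonneg hu (show (0:ℝ) ≤ 2*y - σu - 2*τ by linarith),
          mul_nonneg (neg_nonneg.2 hs0.le) (show (0:ℝ) ≤ 2*y - 2*s by linarith)]
  · rw [abs_zero, abs_le] at *
    rcases le_or_gt 0 s with hs0 | hs0
    · rw [abs_of_nonneg hs0]; nlinarith
    · rw [abs_of_neg hs0]; nlinarith
  · rw [abs_le, not_and_or, not_le, not_le] at h2
    rcases h2 with h2 | h2
    · rw [abs_of_nonpos (max_le (by linarith) hl)]
      rcases le_or_gt 0 s with hs0 | hs0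
      · rw [abs_of_nonneg hs0]
        rcases max_cases (y + τ) σl with ⟨hm, hm2⟩ | ⟨hm, hm2⟩ <;> rw [hm]
        · nlinarith [sq_nonneg (s - y - τ), mul_nonneg hτ.le hs0]
        · nlinarith [mul_nonneg hτ.le hs0, mul_nonneg (neg_nonneg.2 hl) (show (0:ℝ) ≤ -2*y - σl - 2*τ by linarith),
            mul_nonneg hs0 (show (0:ℝ) ≤ 2*s - 2*y by linarith)]
      · rw [abs_of_neg hs0]
        rcases max_cases (y + τ) σl with ⟨hm, hm2⟩ | ⟨hm, hm2⟩ <;> rw [hm]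
        · nlinarith [sq_nonneg (s - y - τ)]
        · nlinarith [sq_nonneg (s - y - τ), mul_nonneg (sub_nonneg.2 hs1) (show (0:ℝ) ≤ s + σl - 2*y - 2*τ by linarith)]
    · linarith

/-- **Projected soft-thresholding solves the proximal problem in `L²`.** On a finite
measure space, for a square-integrable measurable `σtil`, `τ > 0` and bounds
`σl ≤ 0 ≤ σu`, the function `x ↦ S (σtil x)` takes values in `[σl, σu]`, the integrals
`τ ∫ |S (σtil x)| dμ + (1/2) ∫ (S (σtil x) - σtil x)² dμ` are finite, and this quantity
is `≤ τ ∫ |σ x| dμ + (1/2) ∫ (σ x - σtil x)² dμ` for every measurable `σ` with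
`σl ≤ σ x ≤ σu` for μ-a.e. `x`. -/
theorem projected_soft_thresholding_prox_L2 {Ω : Type*} [MeasurableSpace Ω]
    (μ : Measure Ω) [IsFiniteMeasure μ] (σtil : Ω → ℝ) (hmeas : Measurable σtil)
    (hL2 : Integrable (fun x => (σtil x) ^ 2) μ)
    (τ σl σu : ℝ) (hτ : 0 < τ) (hl : σl ≤ 0) (hu : 0 ≤ σu) :
    (∀ x : Ω, projSoftThresh τ σl σu (σtil x) ∈ Set.Icc σl σu) ∧
      Integrable (fun x => |projSoftThresh τ σl σu (σtil x)|) μ ∧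
      Integrable (fun x => (projSoftThresh τ σl σu (σtil x) - σtil x) ^ 2) μ ∧
      ∀ σ : Ω → ℝ, Measurable σ → (∀ᵐ x ∂μ, σl ≤ σ x ∧ σ x ≤ σu) →
        τ * ∫ x, |projSoftThresh τ σl σu (σtil x)| ∂μ +
            (1 / 2) * ∫ x, (projSoftThresh τ σl σu (σtil x) - σtil x) ^ 2 ∂μ ≤
          τ * ∫ x, |σ x| ∂μ + (1 / 2) * ∫ x, (σ x - σtil x) ^ 2 ∂μ := by
  set C := max σu (-σl) with hC
  have hCb : ∀ a : ℝ, σl ≤ a → a ≤ σu → |a| ≤ C := fun a h1 h2 =>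
    abs_le.2 ⟨by simp only [hC]; rcases le_max_iff.1 (le_refl C) with _ | _ <;> nlinarith [le_max_left σu (-σl), le_max_right σu (-σl)], le_trans h2 (le_max_left _ _)⟩
  have hmem : ∀ x : Ω, projSoftThresh τ σl σu (σtil x) ∈ Set.Icc σl σu := by
    intro x
    unfold projSoftThresh
    split_ifs with h1 h2
    · exact ⟨le_trans hl (le_min (by linarith) hu), min_le_right _ _⟩
    · exact ⟨hl, hu⟩
    · rw [abs_le, not_and_or, not_le, not_le] at h2
      rcases h2 with h2 | h2
      · exact ⟨le_max_right _ _, le_trans (max_le (by linarith) hl) hu⟩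
      · linarith
  have hSmeas : Measurable fun x => projSoftThresh τ σl σu (σtil x) :=
    (pst_meas τ σl σu).comp hmeas
  have hSb : ∀ x, |projSoftThresh τ σl σu (σtil x)| ≤ C := fun x =>
    hCb _ (hmem x).1 (hmem x).2
  have int1 : Integrable (fun x => |projSoftThresh τ σl σu (σtil x)|) μ := by
    refine Integrable.mono' (integrable_const C) hSmeas.abs.aestronglyMeasurable
      (Filter.Eventually.of_forall fun x => ?_)
    rw [Real.norm_eq_abs, abs_abs]; exact hSb x
  have sq_bound : ∀ a b : ℝ, (a - b)^2 ≤ 2*a^2 + 2*b^2 := fun a b => by nlinarith [sq_nonneg (a + b)]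
  have intdom : Integrable (fun x => 2*C^2 + 2*(σtil x)^2) μ :=
    (integrable_const _).add (hL2.const_mul 2)
  have int2 : Integrable (fun x => (projSoftThresh τ σl σu (σtil x) - σtil x) ^ 2) μ := by
    refine Integrable.mono' intdom ((hSmeas.sub hmeas).pow_const 2).aestronglyMeasurable
      (Filter.Eventually.of_forall fun x => ?_)
    rw [Real.norm_eq_abs, abs_of_nonneg (sq_nonneg _)]
    calc (projSoftThresh τ σl σu (σtil x) - σtil x)^2
        ≤ 2*(projSoftThresh τ σl σu (σtil x))^2 + 2*(σtil x)^2 := sq_bound _ _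
      _ ≤ 2*C^2 + 2*(σtil x)^2 := by nlinarith [hSb x, abs_nonneg (projSoftThresh τ σl σu (σtil x)), sq_abs (projSoftThresh τ σl σu (σtil x)), sq_nonneg (|projSoftThresh τ σl σu (σtil x)| - C)]
  refine ⟨hmem, int1, int2, fun σ hσm hσb => ?_⟩
  have int3 : Integrable (fun x => |σ x|) μ := by
    refine Integrable.mono' (integrable_const C) hσm.abs.aestronglyMeasurable ?_
    filter_upwards [hσb] with x hx
    rw [Real.norm_eq_abs, abs_abs]; exact hCb _ hx.1 hx.2
  have int4 : Integrable (fun x => (σ x - σtil x) ^ 2) μ := by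
    refine Integrable.mono' intdom ((hσm.sub hmeas).pow_const 2).aestronglyMeasurable ?_
    filter_upwards [hσb] with x hx
    rw [Real.norm_eq_abs, abs_of_nonneg (sq_nonneg _)]
    have hb := hCb _ hx.1 hx.2
    calc (σ x - σtil x)^2 ≤ 2*(σ x)^2 + 2*(σtil x)^2 := sq_bound _ _
      _ ≤ 2*C^2 + 2*(σtil x)^2 := by nlinarith [abs_nonneg (σ x), sq_abs (σ x), sq_nonneg (|σ x| - C)]
  have key : ∀ᵐ x ∂μ,
      τ * |projSoftThresh τ σl σu (σtil x)| + (1/2) * (projSoftThresh τ σl σu (σtil x) - σtil x)^2 ≤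
        τ * |σ x| + (1/2) * (σ x - σtil x)^2 := by
    filter_upwards [hσb] with x hx
    exact pst_key τ σl σu (σtil x) (σ x) hτ hl hu hx.1 hx.2
  rw [← integral_const_mul, ← integral_const_mul, ← integral_const_mul, ← integral_const_mul,
    ← integral_add (int1.const_mul τ) (int2.const_mul (1/2)),
    ← integral_add (int3.const_mul τ) (int4.const_mul (1/2))]
  exact integral_mono_ae ((int1.const_mul τ).add (int2.const_mul (1/2)))
    ((int3.const_mul τ).add (int4.const_mul (1/2))) key
end

section
/- Equivalence of the complementarity conditions with the nonsmooth equation E = 0: Let γ > 0, k > 0 and σ_l < 0 < σ_u be real numbers, and let σ, μ ∈ ℝ. Define E(σ, μ) = σ − max(0, σ + k(μ − γ)) + max(0, σ − σ_u + k(μ − γ)) − min(0, σ + k(μ + γ)) + min(0, σ − σ_l + k(μ + γ)). Then E(σ, μ) = 0 if and only if there exist real numbers λ, λ_a, λ_b such that μ = λ + λ_b − λ_a and (σ, λ, λ_a, λ_b) satisfies the complementarity conditions. -/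
/-- Given `γ > 0` and bounds `σl < 0 < σu`, a quadruple `(σ, lam, la, lb)` of real
numbers satisfies the complementarity conditions if `la ≥ 0`, `lb ≥ 0`,
`σl ≤ σ ≤ σu`, `la * (σ - σl) = 0`, `lb * (σu - σ) = 0`, `lam = γ` if `σ > 0`,
`lam = -γ` if `σ < 0`, and `|lam| ≤ γ` if `σ = 0`. -/
def ComplementarityConditions (γ σl σu σ lam la lb : ℝ) : Prop :=
  0 ≤ la ∧ 0 ≤ lb ∧ σl ≤ σ ∧ σ ≤ σu ∧ la * (σ - σl) = 0 ∧ lb * (σu - σ) = 0 ∧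
    (0 < σ → lam = γ) ∧ (σ < 0 → lam = -γ) ∧ (σ = 0 → |lam| ≤ γ)

/-- **Equivalence of the complementarity conditions with the nonsmooth equation
`E = 0`.** For `γ > 0`, `k > 0`, `σl < 0 < σu` and `σ μ : ℝ`, with
`E (σ, μ) = σ - max 0 (σ + k (μ - γ)) + max 0 (σ - σu + k (μ - γ))
  - min 0 (σ + k (μ + γ)) + min 0 (σ - σl + k (μ + γ))`,
one has `E (σ, μ) = 0` if and only if there exist `lam, la, lb` with
`μ = lam + lb - la` satisfying the complementarity conditions. -/
theorem nonsmooth_equation_iff_complementarity (γ k σl σu σ μ : ℝ)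
    (hγ : 0 < γ) (hk : 0 < k) (hl : σl < 0) (hu : 0 < σu) :
    σ - max 0 (σ + k * (μ - γ)) + max 0 (σ - σu + k * (μ - γ)) -
        min 0 (σ + k * (μ + γ)) + min 0 (σ - σl + k * (μ + γ)) = 0 ↔
      ∃ lam la lb : ℝ, μ = lam + lb - la ∧
        ComplementarityConditions γ σl σu σ lam la lb := by
  have hkγ : 0 < k * γ := mul_pos hk hγ
  have hdiff : k * (μ + γ) - k * (μ - γ) = 2 * (k * γ) := by ring
  constructor
  · intro hE
    rcases le_or_gt (σ - σl + k * (μ + γ)) 0 with hD | hD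
    · -- all four arguments nonpositive
      have hC : σ + k * (μ + γ) ≤ 0 := by linarith
      have hA : σ + k * (μ - γ) ≤ 0 := by linarith
      have hB : σ - σu + k * (μ - γ) ≤ 0 := by linarith
      rw [max_eq_left hA, max_eq_left hB, min_eq_right hC, min_eq_right hD] at hE
      have hσ : σ = σl := by linarith
      have hμγ : μ + γ ≤ 0 := by nlinarith
      refine ⟨-γ, -γ - μ, 0, by ring, by linarith, le_refl 0, le_of_eq hσ.symm,
        by linarith, by rw [hσ]; ring, by ring, ?_, fun _ => rfl, ?_⟩
      · intro h; exfalso; linarith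
      · intro h; exfalso; linarith
    · rcases le_or_gt (σ + k * (μ + γ)) 0 with hC | hC
      · have hA : σ + k * (μ - γ) ≤ 0 := by linarith
        have hB : σ - σu + k * (μ - γ) ≤ 0 := by linarith
        rw [max_eq_left hA, max_eq_left hB, min_eq_right hC, min_eq_left hD.le] at hE
        have h0 : k * (μ + γ) = 0 := by linarith
        have hμγ : μ + γ = 0 := by
          rcases mul_eq_zero.mp h0 with h | h
          · exact absurd h (ne_of_gt hk)
          · exact h
        refine ⟨-γ, 0, 0, by linarith, le_refl 0, le_refl 0, by linarith, by linarith,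
          by ring, by ring, ?_, fun _ => rfl, ?_⟩
        · intro h; exfalso; linarith
        · intro _; rw [abs_neg, abs_of_pos hγ]
      · rcases le_or_gt (σ + k * (μ - γ)) 0 with hA | hA
        · have hB : σ - σu + k * (μ - γ) ≤ 0 := by linarith
          rw [max_eq_left hA, max_eq_left hB, min_eq_left hC.le, min_eq_left hD.le] at hE
          have hσ : σ = 0 := by linarith
          have h1 : μ ≤ γ := by nlinarith
          have h2 : -γ ≤ μ := by nlinarith
          refine ⟨μ, 0, 0, by ring, le_refl 0, le_refl 0, by linarith, by linarith,
            by ring, by ring, ?_, ?_, ?_⟩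
          · intro h; exfalso; linarith
          · intro h; exfalso; linarith
          · intro _; exact abs_le.mpr ⟨h2, h1⟩
        · rcases le_or_gt (σ - σu + k * (μ - γ)) 0 with hB | hB
          · rw [max_eq_right hA.le, max_eq_left hB, min_eq_left hC.le,
              min_eq_left hD.le] at hE
            have h0 : k * (μ - γ) = 0 := by linarith
            have hμγ : μ - γ = 0 := by
              rcases mul_eq_zero.mp h0 with h | h
              · exact absurd h (ne_of_gt hk)
              · exact h
            have hσ : 0 < σ := by linarith
            refine ⟨γ, 0, 0, by linarith, le_refl 0, le_refl 0, by linarith, by linarith,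
              by ring, by ring, fun _ => rfl, ?_, ?_⟩
            · intro h; exfalso; linarith
            · intro h; exfalso; linarith
          · rw [max_eq_right hA.le, max_eq_right hB.le, min_eq_left hC.le,
              min_eq_left hD.le] at hE
            have hσ : σ = σu := by linarith
            have hμγ : 0 < μ - γ := by nlinarith
            refine ⟨γ, 0, μ - γ, by ring, le_refl 0, by linarith, by linarith, hσ.le,
              by ring, by rw [hσ]; ring, fun _ => rfl, ?_, ?_⟩
            · intro h; exfalso; linarith
            · intro h; exfalso; linarith
  · rintro ⟨lam, la, lb, hμ, h1, h2, h3, h4, h5, h6, h7, h8, h9⟩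
    rcases lt_trichotomy σ 0 with hs | hs | hs
    · -- σ < 0
      have hlam : lam = -γ := h8 hs
      have hlb : lb = 0 := by
        rcases mul_eq_zero.mp h6 with h | h
        · exact h
        · exfalso; linarith
      rcases eq_or_lt_of_le h3 with he | he
      · -- σ = σl
        have hkla : 0 ≤ k * la := mul_nonneg hk.le h1
        have hmg : k * (μ - γ) = -2 * (k * γ) - k * la := by
          rw [hμ, hlam, hlb]; ring
        have hmp : k * (μ + γ) = -(k * la) := by rw [hμ, hlam, hlb]; ring
        have hA : σ + k * (μ - γ) ≤ 0 := by linarith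
        have hB : σ - σu + k * (μ - γ) ≤ 0 := by linarith
        have hC : σ + k * (μ + γ) ≤ 0 := by linarith
        have hD : σ - σl + k * (μ + γ) ≤ 0 := by linarith
        rw [max_eq_left hA, max_eq_left hB, min_eq_right hC, min_eq_right hD]
        linarith
      · -- σl < σ
        have hla : la = 0 := by
          rcases mul_eq_zero.mp h5 with h | h
          · exact h
          · exfalso; linarith
        have hmp : k * (μ + γ) = 0 := by rw [hμ, hlam, hlb, hla]; ring
        have hA : σ + k * (μ - γ) ≤ 0 := by linarith
        have hB : σ - σu + k * (μ - γ) ≤ 0 := by linarith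
        have hC : σ + k * (μ + γ) ≤ 0 := by linarith
        have hD : 0 ≤ σ - σl + k * (μ + γ) := by linarith
        rw [max_eq_left hA, max_eq_left hB, min_eq_right hC, min_eq_left hD]
        linarith
    · -- σ = 0
      have habs := abs_le.mp (h9 hs)
      have hla : la = 0 := by
        rcases mul_eq_zero.mp h5 with h | h
        · exact h
        · exfalso; rw [hs] at h; linarith
      have hlb : lb = 0 := by
        rcases mul_eq_zero.mp h6 with h | h
        · exact h
        · exfalso; rw [hs] at h; linarith
      have hμl : μ = lam := by rw [hμ, hla, hlb]; ring
      have hA : σ + k * (μ - γ) ≤ 0 := by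
        nlinarith [mul_nonneg hk.le (show (0:ℝ) ≤ γ - μ by rw [hμl]; linarith)]
      have hB : σ - σu + k * (μ - γ) ≤ 0 := by linarith
      have hC : 0 ≤ σ + k * (μ + γ) := by
        nlinarith [mul_nonneg hk.le (show (0:ℝ) ≤ μ + γ by rw [hμl]; linarith)]
      have hD : 0 ≤ σ - σl + k * (μ + γ) := by linarith
      rw [max_eq_left hA, max_eq_left hB, min_eq_left hC, min_eq_left hD]
      linarith
    · -- 0 < σ
      have hlam : lam = γ := h7 hs
      have hla : la = 0 := by
        rcases mul_eq_zero.mp h5 with h | h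
        · exact h
        · exfalso; linarith
      rcases eq_or_lt_of_le h4 with he | he
      · -- σ = σu
        have hklb : 0 ≤ k * lb := mul_nonneg hk.le h2
        have hmg : k * (μ - γ) = k * lb := by rw [hμ, hlam, hla]; ring
        have hA : 0 ≤ σ + k * (μ - γ) := by linarith
        have hB : 0 ≤ σ - σu + k * (μ - γ) := by linarith
        have hC : 0 ≤ σ + k * (μ + γ) := by linarith
        have hD : 0 ≤ σ - σl + k * (μ + γ) := by linarith
        rw [max_eq_right hA, max_eq_right hB, min_eq_left hC, min_eq_left hD]
        linarith
      · -- σ < σu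
        have hlb : lb = 0 := by
          rcases mul_eq_zero.mp h6 with h | h
          · exact h
          · exfalso; linarith
        have hmg : k * (μ - γ) = 0 := by rw [hμ, hlam, hla, hlb]; ring
        have hA : 0 ≤ σ + k * (μ - γ) := by linarith
        have hB : σ - σu + k * (μ - γ) ≤ 0 := by linarith
        have hC : 0 ≤ σ + k * (μ + γ) := by linarith
        have hD : 0 ≤ σ - σl + k * (μ + γ) := by linarith
        rw [max_eq_right hA, max_eq_left hB, min_eq_left hC, min_eq_left hD]
        linarith
end

section
/- Explicit formulas for the multipliers: Let γ > 0 and σ_l < 0 < σ_u be real numbers, and suppose real numbers (σ, λ, λ_a, λ_b) satisfy the complementarity conditions. Set μ = λ + λ_b − λ_a. Then λ = min(γ, max(−γ, μ)), λ_a = −min(0, μ + γ), and λ_b = max(0, μ − γ). -/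
/-- **Explicit formulas for the multipliers.** If `(σ, lam, la, lb)` satisfies the
complementarity conditions for `γ > 0` and `σl < 0 < σu`, then, with
`μ = lam + lb - la`, one has `lam = min γ (max (-γ) μ)`, `la = -min 0 (μ + γ)` and
`lb = max 0 (μ - γ)`. -/
theorem multiplier_formulas (γ σl σu σ lam la lb : ℝ)
    (hγ : 0 < γ) (hl : σl < 0) (hu : 0 < σu)
    (hcc : ComplementarityConditions γ σl σu σ lam la lb) :
    lam = min γ (max (-γ) (lam + lb - la)) ∧
      la = -min 0 ((lam + lb - la) + γ) ∧
      lb = max 0 ((lam + lb - la) - γ) := by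
  obtain ⟨hla, hlb, hsl, hsu, hca, hcb, hp, hn, hz⟩ := hcc
  rcases lt_trichotomy σ 0 with h | h | h
  · -- σ < 0: lb = 0, lam = -γ
    have hlam := hn h
    have hlb0 : lb = 0 := by
      rcases mul_eq_zero.mp hcb with h' | h'
      · exact h'
      · linarith
    subst hlam; subst hlb0
    refine ⟨?_, ?_, ?_⟩
    · rw [max_eq_left (by linarith), min_eq_right (by linarith)]
    · rw [min_eq_right (by linarith)]; ring
    · rw [max_eq_left (by linarith)]
  · -- σ = 0: la = lb = 0
    have hla0 : la = 0 := by
      rcases mul_eq_zero.mp hca with h' | h'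
      · exact h'
      · linarith
    have hlb0 : lb = 0 := by
      rcases mul_eq_zero.mp hcb with h' | h'
      · exact h'
      · linarith
    have habs := hz h
    rw [abs_le] at habs
    subst hla0; subst hlb0
    refine ⟨?_, ?_, ?_⟩
    · rw [max_eq_right (by linarith), min_eq_right (by linarith)]; ring
    · rw [min_eq_left (by linarith)]; ring
    · rw [max_eq_left (by linarith)]
  · -- σ > 0: la = 0, lam = γ
    have hlam := hp h
    have hla0 : la = 0 := by
      rcases mul_eq_zero.mp hca with h' | h'
      · exact h'
      · linarith
    subst hlam; subst hla0
    refine ⟨?_, ?_, ?_⟩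
    · rw [max_eq_right (by linarith), min_eq_left (by linarith)]
    · rw [min_eq_left (by linarith)]; ring
    · rw [max_eq_right (by linarith)]; ring
end
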